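/- arXiv:2005.09108 — 3 statements merged into one kernel-verified Lean document; each statement's English description precedes it below -/
import Mathlib

section
/- Any positive solution α of tan(α·lₓ) = u(α) lying in (0, π/(2lₓ)) must satisfy α < √(κr·κd/(D(κr+κa))), when D, lₓ, κr, κa, κd > 0. Equivalently: if α ∈ (0, π/(2lₓ)) and α ≥ √(κr·κd/(D(κr+κa))) with α below the pole α₂ = √(κr·κa+κd·D)/D, then tan(α·lₓ) ≠ u(α), since tan(α·lₓ) > 0 while u(α) ≤ 0 on [√(κr·κd/(D(κr+κa))), α₂). -/
open Real

theorem tan_mul_pos {α l : ℝ} (hα : 0 < α) (hl : 0 < l) (h : α < π / (2 * l)) :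
    0 < tan (α * l) := by
  rw [lt_div_iff₀ (by positivity)] at h
  exact tan_pos_of_pos_of_lt_pi_div_two (by positivity) (by linarith)

theorem le_sq_mul_of_sqrt_div_le {c p α : ℝ} (hp : 0 < p) (hα : 0 ≤ α) (h : √(c / p) ≤ α) :
    c ≤ α ^ 2 * p := by
  rwa [sqrt_le_left hα, div_le_iff₀ hp] at h

theorem sq_mul_sq_lt_of_lt_sqrt_div {K D α : ℝ} (hD : 0 < D) (hα : 0 ≤ α) (h : α < √K / D) :
    α ^ 2 * D ^ 2 < K := by
  rw [lt_div_iff₀ hD, lt_sqrt (by positivity)] at h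
  rwa [← mul_pow]

theorem no_solution_above_numerator_root_general
    (D lx κr κa κd : ℝ)
    (hD : 0 < D) (hlx : 0 < lx) (hκr : 0 < κr) (hκa : 0 < κa) :
    ∀ α : ℝ, 0 < α → α < Real.pi / (2 * lx) →
      Real.sqrt (κr * κd / (D * (κr + κa))) ≤ α →
      α < Real.sqrt (κr * κa + κd * D) / D →
      Real.tan (α * lx) ≠
        (α ^ 2 * D * (κr + κa) - κr * κd) / (α * (α ^ 2 * D ^ 2 - (κr * κa + κd * D))) := by
  intro α hα hαπ hroot hpole
  have hnum : 0 ≤ α ^ 2 * D * (κr + κa) - κr * κd := by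
    have := le_sq_mul_of_sqrt_div_le (by positivity) hα.le hroot
    linarith
  have hden : α * (α ^ 2 * D ^ 2 - (κr * κa + κd * D)) < 0 :=
    mul_neg_of_pos_of_neg hα (sub_neg.2 (sq_mul_sq_lt_of_lt_sqrt_div hD hα.le hpole))
  exact ((div_nonpos_of_nonneg_of_nonpos hnum hden.le).trans_lt (tan_mul_pos hα hlx hαπ)).ne'

theorem no_solution_above_numerator_root
    (D lx κr κa κd : ℝ)
    (hD : 0 < D) (hlx : 0 < lx) (hκr : 0 < κr) (hκa : 0 < κa) (hκd : 0 < κd)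
    (hlt : Real.sqrt (κr * κd / (D * (κr + κa))) < Real.sqrt (κr * κa + κd * D) / D) :
    ∀ α : ℝ, 0 < α → α < Real.pi / (2 * lx) →
      Real.sqrt (κr * κd / (D * (κr + κa))) ≤ α →
      α < Real.sqrt (κr * κa + κd * D) / D →
      Real.tan (α * lx) ≠
        (α ^ 2 * D * (κr + κa) - κr * κd) / (α * (α ^ 2 * D ^ 2 - (κr * κa + κd * D))) :=
  no_solution_above_numerator_root_general D lx κr κa κd hD hlx hκr hκa
end

section
/- Suppose β₁ > 0 satisfies tan(β₁·l_y) = v(β₁) with v(β) = β·D·(κ₁y+κ₂y)/(β²D² − κ₁y·κ₂y), where D, l_y, κ₁y, κ₂y > 0. If β₍₁₎ := √(κ₁y·κ₂y)/D < π/(2l_y) and β₁ is the smallest positive solution, then β₍₁₎ < β₁ < π/(2l_y). In particular there is no solution in (0, β₍₁₎] because tan(β·l_y) > 0 and v(β) < 0 there. -/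
open Real Set

/-! Below the pole `√(κ₁κ₂)/D` of `v` the tangent is positive while `v ≤ 0`, so there is no root.
Writing `v = N / M` and clearing denominators, `tan (β l) = v β` becomes the zero of the continuous function
`sin (β l) · M β - cos (β l) · N β`, which is negative at the pole (where `M = 0`) and positive at
`π/(2l)` (where `cos = 0`); the intermediate value theorem gives a root in between, which bounds
the least root from above. -/

theorem Real.tan_ne_div_of_nonneg_of_nonpos {x n d : ℝ} (hx₀ : 0 < x) (hx : x < π / 2)
    (hn : 0 ≤ n) (hd : d ≤ 0) : tan x ≠ n / d :=
  ((div_nonpos_of_nonneg_of_nonpos hn hd).trans_lt (tan_pos_of_pos_of_lt_pi_div_two hx₀ hx)).ne'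

theorem Real.exists_tan_mul_eq_div {N M : ℝ → ℝ} {l a b : ℝ} (ha : 0 ≤ a) (hab : a < b)
    (hb : b * l = π / 2) (hN : ContinuousOn N (Icc a b)) (hM : ContinuousOn M (Icc a b))
    (hN_pos : ∀ x ∈ Icc a b, 0 < N x) (hMa : M a ≤ 0) (hMb : 0 < M b) :
    ∃ x ∈ Ioo a b, tan (x * l) = N x / M x := by
  have hl : 0 < l := pos_of_mul_pos_right (hb ▸ pi_div_two_pos) (ha.trans hab.le)
  have hcos : ∀ x ∈ Ico a b, 0 < cos (x * l) := fun x hx =>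
    cos_pos_of_mem_Ioo ⟨by nlinarith [pi_pos, hx.1], hb ▸ mul_lt_mul_of_pos_right hx.2 hl⟩
  set h : ℝ → ℝ := fun x => sin (x * l) * M x - cos (x * l) * N x
  have hh : ContinuousOn h (Icc a b) := by fun_prop
  have ha_neg : h a < 0 := by
    have hsin : 0 ≤ sin (a * l) :=
      sin_nonneg_of_nonneg_of_le_pi (by positivity) (by nlinarith [pi_pos])
    have := mul_nonpos_of_nonneg_of_nonpos hsin hMa
    have := mul_pos (hcos a ⟨le_rfl, hab⟩) (hN_pos a ⟨le_rfl, hab.le⟩)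
    simp only [h]
    linarith
  have hb_pos : 0 < h b := by simpa [h, hb] using hMb
  obtain ⟨x, hx, hx0⟩ := intermediate_value_Ioo hab.le hh ⟨ha_neg, hb_pos⟩
  have hcosx := hcos x (Ioo_subset_Ico_self hx)
  have hMx : M x ≠ 0 := fun hMx => by
    have := mul_pos hcosx (hN_pos x (Ioo_subset_Icc_self hx))
    simp only [h, hMx] at hx0
    linarith
  refine ⟨x, hx, ?_⟩
  rw [tan_eq_sin_div_cos, div_eq_div_iff hcosx.ne' hMx]
  simp only [h] at hx0
  linarith

theorem sq_mul_sq_sub_nonpos_iff {β D c : ℝ} (hβ : 0 ≤ β) (hD : 0 < D) (hc : 0 ≤ c) :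
    β ^ 2 * D ^ 2 - c ≤ 0 ↔ β ≤ √c / D := by
  rw [le_div_iff₀ hD, Real.le_sqrt (by positivity) hc, mul_pow, sub_nonpos]

theorem beta1_reaction_limited_bounds
    (D ly κ1y κ2y β₁ : ℝ)
    (hD : 0 < D) (hly : 0 < ly) (hκ1 : 0 < κ1y) (hκ2 : 0 < κ2y)
    (hpole : Real.sqrt (κ1y * κ2y) / D < Real.pi / (2 * ly))
    (hleast : IsLeast {β : ℝ | 0 < β ∧
        Real.tan (β * ly) = β * D * (κ1y + κ2y) / (β ^ 2 * D ^ 2 - κ1y * κ2y)} β₁) :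
    Real.sqrt (κ1y * κ2y) / D < β₁ ∧ β₁ < Real.pi / (2 * ly) ∧
      ∀ β ∈ Ioc (0 : ℝ) (Real.sqrt (κ1y * κ2y) / D),
        Real.tan (β * ly) ≠ β * D * (κ1y + κ2y) / (β ^ 2 * D ^ 2 - κ1y * κ2y) := by
  obtain ⟨⟨hβ₁_pos, hβ₁⟩, hβ₁_le⟩ := hleast
  set s := √(κ1y * κ2y) / D
  set p := π / (2 * ly)
  have hp : p * ly = π / 2 := by simp only [p]; field_simp
  have hs_pos : 0 < s := by positivity
  have hM : ∀ β, 0 ≤ β → (β ^ 2 * D ^ 2 - κ1y * κ2y ≤ 0 ↔ β ≤ s) := fun β hβ =>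
    sq_mul_sq_sub_nonpos_iff hβ hD (by positivity)
  have no_root : ∀ β ∈ Ioc 0 s,
      tan (β * ly) ≠ β * D * (κ1y + κ2y) / (β ^ 2 * D ^ 2 - κ1y * κ2y) := fun β ⟨hβ, hβs⟩ =>
    tan_ne_div_of_nonneg_of_nonpos (by positivity)
      (hp ▸ mul_lt_mul_of_pos_right (hβs.trans_lt hpole) hly) (by positivity)
      ((hM β hβ.le).2 hβs)
  obtain ⟨β, ⟨hsβ, hβp⟩, hβ⟩ := exists_tan_mul_eq_div (N := fun β => β * D * (κ1y + κ2y))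
    (M := fun β => β ^ 2 * D ^ 2 - κ1y * κ2y) hs_pos.le hpole hp (by fun_prop) (by fun_prop)
    (fun x hx => by have := hs_pos.trans_le hx.1; positivity)
    ((hM s hs_pos.le).2 le_rfl)
    (not_le.1 fun h => hpole.not_ge ((hM p (hs_pos.trans hpole).le).1 h))
  exact ⟨not_le.1 fun h => no_root β₁ ⟨hβ₁_pos, h⟩ hβ₁,
    (hβ₁_le ⟨hs_pos.trans hsβ, hβ⟩).trans_lt hβp, no_root⟩
end

section
/- If β₍₁₎ := √(κ₁y·κ₂y)/D > π/l_y, then the smallest positive solution β₁ of tan(β·l_y) = v(β), where v(β) = β·D·(κ₁y+κ₂y)/(β²D² − κ₁y·κ₂y), satisfies β₁ ∈ (π/(2l_y), π/l_y]. -/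
open Real Set Filter Topology

theorem tendsto_tan_pi_div_two_right' : Tendsto Real.tan (𝓝[>] (Real.pi / 2)) atBot := by
  have h : Tendsto (fun x => x - Real.pi) (𝓝[>] (Real.pi / 2)) (𝓝[>] (-(Real.pi / 2))) := by
    apply tendsto_nhdsWithin_of_tendsto_nhds_of_eventually_within
    · have h2 : Tendsto (fun x => x - Real.pi) (𝓝 (Real.pi / 2)) (𝓝 (Real.pi / 2 - Real.pi)) :=
        (continuous_id.sub continuous_const).tendsto _
      have : Real.pi / 2 - Real.pi = -(Real.pi / 2) := by ring
      rw [this] at h2; exact h2.mono_left nhdsWithin_le_nhds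
    · filter_upwards [self_mem_nhdsWithin] with x hx
      simp only [mem_Ioi] at hx ⊢
      linarith
  have := Real.tendsto_tan_neg_pi_div_two.comp h
  refine this.congr fun x => ?_
  simp only [Function.comp]
  exact Real.tan_periodic.sub_eq x

set_option maxHeartbeats 1000000 in
theorem beta1_diffusion_limited_bounds
    (D ly κ1y κ2y β₁ : ℝ)
    (hD : 0 < D) (hly : 0 < ly) (hκ1 : 0 < κ1y) (hκ2 : 0 < κ2y)
    (hpole : Real.pi / ly < Real.sqrt (κ1y * κ2y) / D)
    (hleast : IsLeast {β : ℝ | 0 < β ∧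
        Real.tan (β * ly) = β * D * (κ1y + κ2y) / (β ^ 2 * D ^ 2 - κ1y * κ2y)} β₁) :
    Real.pi / (2 * ly) < β₁ ∧ β₁ ≤ Real.pi / ly := by
  have hπ := Real.pi_pos
  set c := Real.pi / (2 * ly) with hc
  set b := Real.pi / ly with hb
  have hcb : c < b := by
    rw [hc, hb, div_lt_div_iff₀ (by positivity) hly]
    nlinarith
  have hc0 : 0 < c := by positivity
  -- denominator negative for 0 < β ≤ b
  have hden : ∀ β : ℝ, 0 < β → β ≤ b → β ^ 2 * D ^ 2 - κ1y * κ2y < 0 := by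
    intro β hβ hβb
    have h1 : β * D < Real.sqrt (κ1y * κ2y) := by
      have : β < Real.sqrt (κ1y * κ2y) / D := lt_of_le_of_lt hβb hpole
      calc β * D < Real.sqrt (κ1y * κ2y) / D * D := by nlinarith
        _ = Real.sqrt (κ1y * κ2y) := by field_simp
    have h2 : (β * D) ^ 2 < κ1y * κ2y := by
      have := Real.sq_sqrt (by positivity : (0:ℝ) ≤ κ1y * κ2y)
      nlinarith [Real.sqrt_nonneg (κ1y * κ2y), mul_pos hβ hD]
    nlinarith
  have hvneg : ∀ β : ℝ, 0 < β → β ≤ b →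
      β * D * (κ1y + κ2y) / (β ^ 2 * D ^ 2 - κ1y * κ2y) < 0 := by
    intro β hβ hβb
    exact div_neg_of_pos_of_neg (by positivity) (hden β hβ hβb)
  obtain ⟨⟨hβ₁pos, hβ₁eq⟩, hlb⟩ := hleast
  constructor
  · -- β₁ > c
    by_contra h
    push_neg at h
    have hv : Real.tan (β₁ * ly) < 0 := by
      rw [hβ₁eq]; exact hvneg β₁ hβ₁pos (le_trans h hcb.le)
    have hle : β₁ * ly ≤ Real.pi / 2 := by
      have := mul_le_mul_of_nonneg_right h hly.le
      rw [hc] at this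
      calc β₁ * ly ≤ Real.pi / (2 * ly) * ly := this
        _ = Real.pi / 2 := by field_simp
    rcases lt_or_eq_of_le hle with hlt | heq
    · exact absurd (Real.tan_pos_of_pos_of_lt_pi_div_two (by positivity) hlt) (by linarith)
    · rw [heq, Real.tan_pi_div_two] at hv; linarith
  · -- β₁ ≤ b via IVT
    set f : ℝ → ℝ := fun β =>
      Real.tan (β * ly) - β * D * (κ1y + κ2y) / (β ^ 2 * D ^ 2 - κ1y * κ2y) with hf
    have hfb : 0 < f b := by
      have : b * ly = Real.pi := by rw [hb]; field_simp
      simp only [hf, this, Real.tan_pi]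
      have := hvneg b (by positivity) le_rfl
      linarith
    -- find a ∈ (c, b) with f a < 0
    have hmul : Tendsto (fun β : ℝ => β * ly) (𝓝[>] c) (𝓝[>] (Real.pi / 2)) := by
      apply tendsto_nhdsWithin_of_tendsto_nhds_of_eventually_within
      · have h2 : Tendsto (fun β : ℝ => β * ly) (𝓝 c) (𝓝 (c * ly)) :=
          (continuous_id.mul continuous_const).tendsto _
        have : c * ly = Real.pi / 2 := by rw [hc]; field_simp
        rw [this] at h2; exact h2.mono_left nhdsWithin_le_nhds
      · filter_upwards [self_mem_nhdsWithin] with x hx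
        simp only [mem_Ioi] at hx ⊢
        have : c * ly < x * ly := by nlinarith
        have hcl : c * ly = Real.pi / 2 := by rw [hc]; field_simp
        linarith [hcl ▸ this]
    have htan : Tendsto (fun β : ℝ => Real.tan (β * ly)) (𝓝[>] c) atBot :=
      tendsto_tan_pi_div_two_right'.comp hmul
    have hvc : Tendsto (fun β : ℝ => β * D * (κ1y + κ2y) / (β ^ 2 * D ^ 2 - κ1y * κ2y))
        (𝓝[>] c) (𝓝 (c * D * (κ1y + κ2y) / (c ^ 2 * D ^ 2 - κ1y * κ2y))) := by
      apply Tendsto.mono_left _ nhdsWithin_le_nhds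
      have hnum : Continuous fun β : ℝ => β * D * (κ1y + κ2y) := by continuity
      have hdenc : Continuous fun β : ℝ => β ^ 2 * D ^ 2 - κ1y * κ2y := by continuity
      exact (hnum.continuousAt.div hdenc.continuousAt
        (ne_of_lt (hden c hc0 hcb.le))).tendsto
    have hub : ∀ᶠ x in 𝓝[>] c,
        -(x * D * (κ1y + κ2y) / (x ^ 2 * D ^ 2 - κ1y * κ2y)) ≤
          -(c * D * (κ1y + κ2y) / (c ^ 2 * D ^ 2 - κ1y * κ2y)) + 1 :=
      hvc.neg.eventually_le_const (by linarith)
    have hftend : Tendsto f (𝓝[>] c) atBot :=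
      (tendsto_atBot_add_right_of_ge' _ _ htan hub).congr (fun x => by simp only [hf]; ring)
    have hev : ∀ᶠ a in 𝓝[>] c, f a < 0 ∧ a < b := by
      have h1 : ∀ᶠ a in 𝓝[>] c, f a < 0 := hftend.eventually (eventually_lt_atBot 0)
      have h2 : ∀ᶠ a in 𝓝[>] c, a < b :=
        eventually_nhdsWithin_of_eventually_nhds (tendsto_id.eventually_lt_const hcb)
      exact h1.and h2
    obtain ⟨a, ⟨hfa, hab⟩, hca⟩ := (hev.and self_mem_nhdsWithin).exists
    replace hca : c < a := hca
    -- continuity of f on [a, b]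
    have hcont : ContinuousOn f (Icc a b) := by
      intro x hx
      obtain ⟨hxa, hxb⟩ := hx
      have hx0 : 0 < x := lt_of_lt_of_le (lt_trans hc0 hca) hxa
      have hcx : c < x := lt_of_lt_of_le hca hxa
      have hcl : c * ly = Real.pi / 2 := by rw [hc]; field_simp
      have hbl : b * ly = Real.pi := by rw [hb]; field_simp
      have hx1 : Real.pi / 2 < x * ly := by
        rw [← hcl]; exact mul_lt_mul_of_pos_right hcx hly
      have hx2 : x * ly ≤ Real.pi := by
        rw [← hbl]; exact mul_le_mul_of_nonneg_right hxb hly.le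
      have hcos : Real.cos (x * ly) ≠ 0 :=
        ne_of_lt (Real.cos_neg_of_pi_div_two_lt_of_lt hx1 (by linarith))
      have hmulc : ContinuousAt (fun β : ℝ => β * ly) x :=
        continuousAt_id.mul continuousAt_const
      have h1 : ContinuousAt (fun β : ℝ => Real.tan (β * ly)) x :=
        ContinuousAt.comp (g := Real.tan) (f := fun β : ℝ => β * ly)
          (Real.continuousAt_tan.2 hcos) hmulc
      have h2 : ContinuousAt (fun β : ℝ => β * D * (κ1y + κ2y) / (β ^ 2 * D ^ 2 - κ1y * κ2y)) x :=
        ((continuousAt_id.mul continuousAt_const).mul continuousAt_const).div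
          (((continuousAt_id.pow 2).mul continuousAt_const).sub continuousAt_const)
          (ne_of_lt (hden x hx0 hxb))
      exact (h1.sub h2).continuousWithinAt
    have hx0mem : (0:ℝ) ∈ Icc (f a) (f b) := ⟨hfa.le, hfb.le⟩
    obtain ⟨x, hxmem, hfx⟩ := intermediate_value_Icc hab.le hcont hx0mem
    have hxset : x ∈ {β : ℝ | 0 < β ∧
        Real.tan (β * ly) = β * D * (κ1y + κ2y) / (β ^ 2 * D ^ 2 - κ1y * κ2y)} := by
      refine ⟨lt_of_lt_of_le (lt_trans hc0 hca) hxmem.1, ?_⟩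
      have := hfx
      simp only [hf] at this
      linarith
    exact le_trans (hlb hxset) hxmem.2
end
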